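/- arXiv:math/0307156 — 6 statements merged into one kernel-verified Lean document; each statement's English description precedes it below -/
import Mathlib

section
/- Let V be a finite-dimensional vector space over a field k, and let F and G be two finite decreasing filtrations of V. Then F and G are n-opposed (i.e. Gr_G^q Gr_F^p V = 0 whenever p + q ≠ n) if and only if for all integers p, q with p + q = n + 1 one has F^p ⊕ G^q = V (internal direct sum). -/
/-!
`Gr_G^q Gr_F^p V = 0` means `F^p ∩ G^q ⊆ (F^{p+1} ∩ G^q) + (F^p ∩ G^{q+1})`. For `p + q > n`
this pushes `F^p ∩ G^q` to larger indices until one filtration vanishes, so `F^p ∩ G^q = 0`.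
For `p + q ≤ n + 1`, induct upward from where one filtration is all of `V`: the modular law and the
vanishing at `(p - 1, q - 1)` turn `F^{p-1} + G^q = V` and `F^p + G^{q-1} = V` into
`F^{p-1} ⊆ F^p + G^q`, hence `F^p + G^q = V`. Conversely, if `F^{p+1} + G^{q+1} = V`, the modular
law gives `F^p ∩ G^q = (F^{p+1} ∩ G^q) + (F^p ∩ G^{q+1})`.
-/

open Submodule

/-- The bigraded piece `Gr_G^q Gr_F^p V`, realized via the canonical (Zassenhaus)
isomorphism as `(F^p ⊓ G^q) / ((F^{p+1} ⊓ G^q) ⊔ (F^p ⊓ G^{q+1}))`. -/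
abbrev GrGr {k V : Type*} [Field k] [AddCommGroup V] [Module k V]
    (F G : ℤ → Submodule k V) (p q : ℤ) :=
  ↥(F p ⊓ G q) ⧸
    Submodule.comap (F p ⊓ G q).subtype ((F (p + 1) ⊓ G q) ⊔ (F p ⊓ G (q + 1)))

theorem Int.induction_of_add_le {P : ℤ → ℤ → Prop} {N a b : ℤ}
    (base : ∀ p q, a ≤ p ∨ b ≤ q → P p q)
    (step : ∀ p q, N ≤ p + q → P (p + 1) q → P p (q + 1) → P p q) :
    ∀ p q, N ≤ p + q → P p q := by
  suffices h : ∀ m : ℕ, ∀ p q, N ≤ p + q → a + b - (p + q) ≤ m → P p q from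
    fun p q hpq => h _ p q hpq (Int.self_le_toNat _)
  intro m
  induction m with
  | zero => exact fun p q _ hm => base p q (by omega)
  | succ m ih =>
    intro p q hN hm
    by_cases hpq : a ≤ p ∨ b ≤ q
    · exact base p q hpq
    · exact step p q hN (ih (p + 1) q (by omega) (by omega)) (ih p (q + 1) (by omega) (by omega))

section Lattice

variable {α : Type*} [Lattice α] [IsModularLattice α] [OrderTop α] {a a' b b' : α}

theorem inf_eq_inf_sup_inf_of_codisjoint (ha : a ≤ a') (hb : b ≤ b') (h : Codisjoint a b) :
    a' ⊓ b' = a ⊓ b' ⊔ a' ⊓ b := by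
  have hb' : b' = b ⊔ a ⊓ b' := by
    rw [← sup_inf_assoc_of_le a hb, sup_comm, h.eq_top, top_inf_eq]
  conv_lhs => rw [hb', inf_comm, sup_comm, sup_inf_assoc_of_le b (inf_le_left.trans ha)]
  rw [inf_comm b]

theorem sup_eq_top_of_le_of_inf_le (ha : a ≤ a') (h₁ : a' ⊔ b = ⊤) (h₂ : a ⊔ b' = ⊤)
    (h : a' ⊓ b' ≤ a ⊓ b' ⊔ a' ⊓ b) : a ⊔ b = ⊤ := by
  have ha' : a' ≤ a ⊔ b :=
    calc a' = a ⊔ b' ⊓ a' := by rw [← sup_inf_assoc_of_le b' ha, h₂, top_inf_eq]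
      _ ≤ a ⊔ b := sup_le le_sup_left
          ((inf_comm b' a').trans_le h |>.trans (sup_le (inf_le_left.trans le_sup_left)
            (inf_le_right.trans le_sup_right)))
  exact top_le_iff.mp (h₁ ▸ sup_le ha' le_sup_right)

end Lattice

section Filtration

variable {α : Type*} [Lattice α] {F G : ℤ → α}

theorem Antitone.inf_eq_bot_of_le_sup_inf [OrderBot α] (hF : Antitone F) (hG : Antitone G)
    {a b n : ℤ} (hFa : F a = ⊥) (hGb : G b = ⊥)
    (h : ∀ p q, n < p + q → F p ⊓ G q ≤ F (p + 1) ⊓ G q ⊔ F p ⊓ G (q + 1)) :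
    ∀ p q, n < p + q → F p ⊓ G q = ⊥ := by
  refine Int.induction_of_add_le (a := a) (b := b) (fun p q hpq => ?_) fun p q hpq h₁ h₂ => ?_
  · rcases hpq with hp | hq
    · exact le_bot_iff.mp (inf_le_left.trans (hFa ▸ hF hp))
    · exact le_bot_iff.mp (inf_le_right.trans (hGb ▸ hG hq))
  · exact le_bot_iff.mp ((h p q hpq).trans_eq (by rw [h₁, h₂, sup_idem]))

theorem Antitone.sup_eq_top_of_le_sup_inf [IsModularLattice α] [OrderTop α] (hF : Antitone F)
    (hG : Antitone G) {a b n : ℤ} (hFa : F a = ⊤) (hGb : G b = ⊤)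
    (h : ∀ p q, p + q < n → F p ⊓ G q ≤ F (p + 1) ⊓ G q ⊔ F p ⊓ G (q + 1)) :
    ∀ p q, p + q ≤ n + 1 → F p ⊔ G q = ⊤ := by
  suffices key : ∀ p q, -(n + 1) ≤ p + q → F (-p) ⊔ G (-q) = ⊤ from
    fun p q hpq => by simpa using key (-p) (-q) (by omega)
  refine Int.induction_of_add_le (a := -a) (b := -b) (fun p q hpq => ?_) fun p q hpq h₁ h₂ => ?_
  · rcases hpq with hp | hq
    · exact top_le_iff.mp ((hFa ▸ hF (by omega : -p ≤ a)).trans le_sup_left)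
    · exact top_le_iff.mp ((hGb ▸ hG (by omega : -q ≤ b)).trans le_sup_right)
  · have hgr := h (-(p + 1)) (-(q + 1)) (by omega)
    rw [show -(p + 1) + 1 = -p by ring, show -(q + 1) + 1 = -q by ring] at hgr
    exact sup_eq_top_of_le_of_inf_le (hF (by omega)) h₁ h₂ hgr

end Filtration

theorem Submodule.subsingleton_quotient_comap_subtype_iff {R M : Type*} [Ring R]
    [AddCommGroup M] [Module R M] {S T : Submodule R M} :
    Subsingleton (S ⧸ comap S.subtype T) ↔ S ≤ T := by
  rw [Submodule.Quotient.subsingleton_iff, comap_subtype_eq_top]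

theorem two_filtrations_n_opposed_iff_isCompl_general
    {k V : Type*} [Field k] [AddCommGroup V] [Module k V]
    (F G : ℤ → Submodule k V)
    (hF : ∀ p q : ℤ, p ≤ q → F q ≤ F p) (hG : ∀ p q : ℤ, p ≤ q → G q ≤ G p)
    (hFtop : ∃ a : ℤ, F a = ⊤) (hFbot : ∃ b : ℤ, F b = ⊥)
    (hGtop : ∃ a : ℤ, G a = ⊤) (hGbot : ∃ b : ℤ, G b = ⊥)
    (n : ℤ) :
    (∀ p q : ℤ, p + q ≠ n → Subsingleton (GrGr F G p q)) ↔
      ∀ p q : ℤ, p + q = n + 1 → IsCompl (F p) (G q) := by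
  simp only [GrGr, subsingleton_quotient_comap_subtype_iff]
  constructor
  · intro h p q hpq
    obtain ⟨aF, hFa⟩ := hFtop
    obtain ⟨bF, hFb⟩ := hFbot
    obtain ⟨aG, hGa⟩ := hGtop
    obtain ⟨bG, hGb⟩ := hGbot
    refine .of_eq ?_ ?_
    · exact Antitone.inf_eq_bot_of_le_sup_inf hF hG hFb hGb (n := n)
        (fun p q _ => h p q (by omega)) p q (by omega)
    · exact Antitone.sup_eq_top_of_le_sup_inf hF hG hFa hGa (n := n)
        (fun p q _ => h p q (by omega)) p q hpq.le
  · intro h p q hpq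
    rcases lt_or_gt_of_ne hpq with hlt | hgt
    · have hcod : Codisjoint (F (p + 1)) (G (q + 1)) :=
        (h (p + 1) (n - p) (by omega)).codisjoint.mono_right (hG (q + 1) (n - p) (by omega))
      exact (inf_eq_inf_sup_inf_of_codisjoint (hF p (p + 1) (by omega))
        (hG q (q + 1) (by omega)) hcod).le
    · have hdis : Disjoint (F p) (G q) :=
        (h p (n + 1 - p) (by omega)).disjoint.mono_right (hG (n + 1 - p) q (by omega))
      exact hdis.eq_bot.le.trans bot_le

/-- Two finite (exhaustive) decreasing filtrations `F`, `G` of a finite-dimensional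
vector space are `n`-opposed (i.e. `Gr_G^q Gr_F^p V = 0` whenever `p + q ≠ n`)
iff `F^p ⊕ G^q = V` (internal direct sum) for all `p + q = n + 1`. -/
theorem two_filtrations_n_opposed_iff_isCompl
    {k V : Type*} [Field k] [AddCommGroup V] [Module k V] [FiniteDimensional k V]
    (F G : ℤ → Submodule k V)
    (hF : ∀ p q : ℤ, p ≤ q → F q ≤ F p) (hG : ∀ p q : ℤ, p ≤ q → G q ≤ G p)
    (hFtop : ∃ a : ℤ, F a = ⊤) (hFbot : ∃ b : ℤ, F b = ⊥)
    (hGtop : ∃ a : ℤ, G a = ⊤) (hGbot : ∃ b : ℤ, G b = ⊥)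
    (n : ℤ) :
    (∀ p q : ℤ, p + q ≠ n → Subsingleton (GrGr F G p q)) ↔
      ∀ p q : ℤ, p + q = n + 1 → IsCompl (F p) (G q) :=
  two_filtrations_n_opposed_iff_isCompl_general F G hF hG hFtop hFbot hGtop hGbot n
end

section
/- Let V be a finite-dimensional vector space with two finite decreasing filtrations F, G that are n-opposed. Setting V^{p,q} = F^p ∩ G^q for p + q = n and V^{p,q} = 0 for p + q ≠ n, the space V is the internal direct sum of the subspaces V^{p,q}, and moreover F^p = ⊕_{p' ≥ p} V^{p', n−p'} and G^q = ⊕_{q' ≥ q} V^{n−q', q'}. -/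
/-!
Reading the opposedness condition as `F^p ⊓ G^q ≤ F^{p+1} ⊓ G^q ⊔ F^p ⊓ G^{q+1}` for `p + q ≠ n`,
downward induction from the bottoms of the filtrations shows `F^p ⊓ G^q = 0` for `p + q > n`, and
upward induction towards the antidiagonal shows `F^p ⊓ G^q ≤ ⨆_{p ≤ p' ≤ n - q} V^{p', n-p'}` for
`p + q ≤ n`. Taking `G^q = V` gives the decomposition of `F^p`, and symmetrically of `G^q`.
For `p + q = n`, the modular law gives `G^q ⊓ (F^{p+1} ⊔ G^{q+1}) = G^{q+1}`, hence
`V^{p,q} ⊓ (F^{p+1} ⊔ G^{q+1}) = F^p ⊓ G^{q+1} = 0`, and every other `V^{p',q'}` lies in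
`F^{p+1} ⊔ G^{q+1}`: the sum is direct.
-/

open Submodule

section Lattice

variable {α : Type*} [Lattice α]

/-- Lattice form of `Gr_G^q Gr_F^p = 0` for `p + q ≠ n`. -/
def IsOpposed (n : ℤ) (F G : ℤ → α) : Prop :=
  ∀ p q : ℤ, p + q ≠ n → F p ⊓ G q ≤ F (p + 1) ⊓ G q ⊔ F p ⊓ G (q + 1)

variable {n : ℤ} {F G : ℤ → α}

theorem IsOpposed.symm (h : IsOpposed n F G) : IsOpposed n G F := fun p q hpq => by
  simpa only [inf_comm, sup_comm] using h q p (by omega)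

theorem IsOpposed.inf_eq_bot [OrderBot α] (h : IsOpposed n F G) (hF : Antitone F)
    (hG : Antitone G) {a b : ℤ} (ha : F a = ⊥) (hb : G b = ⊥) {p q : ℤ} (hpq : n < p + q) :
    F p ⊓ G q = ⊥ := by
  by_cases hp : a ≤ p
  · exact eq_bot_mono (inf_le_left.trans (hF hp)) ha
  by_cases hq : b ≤ q
  · exact eq_bot_mono (inf_le_right.trans (hG hq)) hb
  refine eq_bot_mono (h p q hpq.ne') ?_
  rw [h.inf_eq_bot hF hG ha hb (p := p + 1) (by omega),
    h.inf_eq_bot hF hG ha hb (q := q + 1) (by omega), sup_bot_eq]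
termination_by (a - p).toNat + (b - q).toNat
decreasing_by all_goals omega

theorem IsOpposed.disjoint_sup [OrderBot α] [IsModularLattice α] (h : IsOpposed n F G)
    (hF : Antitone F) (hG : Antitone G) {a b : ℤ} (ha : F a = ⊥) (hb : G b = ⊥) {p q : ℤ}
    (hpq : p + q = n) : Disjoint (F p ⊓ G q) (F (p + 1) ⊔ G (q + 1)) := by
  rw [disjoint_iff]
  calc F p ⊓ G q ⊓ (F (p + 1) ⊔ G (q + 1)) = F p ⊓ (G q ⊓ F (p + 1) ⊔ G (q + 1)) := by
        rw [inf_assoc, inf_sup_assoc_of_le _ (hG (Int.le_add_one le_rfl))]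
    _ = F p ⊓ G (q + 1) := by
        rw [inf_comm (G q), h.inf_eq_bot hF hG ha hb (by omega), bot_sup_eq]
    _ = ⊥ := h.inf_eq_bot hF hG ha hb (by omega)

end Lattice

section CompleteLattice

variable {α : Type*} [CompleteLattice α] {n : ℤ} {F G : ℤ → α}

theorem IsOpposed.inf_le_iSup_Icc (h : IsOpposed n F G) {p q : ℤ} (hpq : p + q ≤ n) :
    F p ⊓ G q ≤ ⨆ p' ∈ Set.Icc p (n - q), F p' ⊓ G (n - p') := by
  rcases hpq.eq_or_lt with hpq | hpq
  · obtain rfl : q = n - p := by omega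
    exact le_iSup₂_of_le (f := fun p' _ => F p' ⊓ G (n - p')) p ⟨le_rfl, by omega⟩ le_rfl
  refine (h p q hpq.ne).trans (sup_le ?_ ?_)
  · exact (h.inf_le_iSup_Icc (p := p + 1) (by omega)).trans
      (biSup_mono fun _ hp' => Set.Icc_subset_Icc_left (by omega) hp')
  · exact (h.inf_le_iSup_Icc (q := q + 1) (by omega)).trans
      (biSup_mono fun _ hp' => Set.Icc_subset_Icc_right (by omega) hp')
termination_by (n - (p + q)).toNat

theorem IsOpposed.eq_iSup_inf (h : IsOpposed n F G) (hF : Antitone F) (hG : Antitone G)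
    {b : ℤ} (hb : G b = ⊤) (p : ℤ) : F p = ⨆ (p' : ℤ) (_ : p ≤ p'), F p' ⊓ G (n - p') := by
  refine le_antisymm ?_ (iSup₂_le fun p' hp' => inf_le_left.trans (hF hp'))
  have hq : G (min b (n - p)) = ⊤ := eq_top_mono (hG (min_le_left _ _)) hb
  calc F p = F p ⊓ G (min b (n - p)) := by rw [hq, inf_top_eq]
    _ ≤ ⨆ p' ∈ Set.Icc p (n - min b (n - p)), F p' ⊓ G (n - p') := h.inf_le_iSup_Icc (by omega)
    _ ≤ ⨆ (p' : ℤ) (_ : p ≤ p'), F p' ⊓ G (n - p') := biSup_mono fun _ hp' => hp'.1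

def bigrading (n : ℤ) (F G : ℤ → α) (pq : ℤ × ℤ) : α :=
  if pq.1 + pq.2 = n then F pq.1 ⊓ G pq.2 else ⊥

theorem bigrading_le_sup (hF : Antitone F) (hG : Antitone G) {p q : ℤ} (hpq : p + q = n)
    {j : ℤ × ℤ} (hj : j ≠ (p, q)) : bigrading n F G j ≤ F (p + 1) ⊔ G (q + 1) := by
  unfold bigrading
  split_ifs with hjn
  · rcases lt_or_gt_of_ne fun h : j.1 = p => hj (Prod.ext h (by omega)) with hjp | hjp
    · exact le_sup_of_le_right (inf_le_right.trans (hG (by omega)))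
    · exact le_sup_of_le_left (inf_le_left.trans (hF (by omega)))
  · exact bot_le

theorem IsOpposed.iSupIndep_bigrading [IsModularLattice α] (h : IsOpposed n F G)
    (hF : Antitone F) (hG : Antitone G) {a b : ℤ} (ha : F a = ⊥) (hb : G b = ⊥) :
    iSupIndep (bigrading n F G) := by
  rintro ⟨p, q⟩
  by_cases hpq : p + q = n
  · exact (h.disjoint_sup hF hG ha hb hpq).mono (by simp only [bigrading, hpq, if_true, le_rfl])
      (iSup₂_le fun j hj => bigrading_le_sup hF hG hpq hj)
  · simp only [bigrading, hpq, if_false, disjoint_bot_left]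

theorem iSup_bigrading_eq_top {a : ℤ} (ha : F a = ⊤)
    (hdec : F a = ⨆ (p' : ℤ) (_ : a ≤ p'), F p' ⊓ G (n - p')) :
    ⨆ pq, bigrading n F G pq = ⊤ := by
  refine top_unique (ha ▸ hdec ▸ iSup₂_le fun p' _ => le_iSup_of_le (p', n - p') ?_)
  simp only [bigrading, add_sub_cancel, if_true, le_rfl]

end CompleteLattice

theorem opposed_filtrations_bigrading_general
    {k V : Type*} [Field k] [AddCommGroup V] [Module k V]
    (F G : ℤ → Submodule k V)
    (hF : ∀ p q : ℤ, p ≤ q → F q ≤ F p) (hG : ∀ p q : ℤ, p ≤ q → G q ≤ G p)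
    (hFtop : ∃ a : ℤ, F a = ⊤) (hFbot : ∃ b : ℤ, F b = ⊥)
    (hGtop : ∃ a : ℤ, G a = ⊤) (hGbot : ∃ b : ℤ, G b = ⊥)
    (n : ℤ)
    (hopp : ∀ p q : ℤ, p + q ≠ n →
      Subsingleton (↥(F p ⊓ G q) ⧸
        Submodule.comap (F p ⊓ G q).subtype ((F (p + 1) ⊓ G q) ⊔ (F p ⊓ G (q + 1))))) :
    DirectSum.IsInternal (fun pq : ℤ × ℤ =>
        if pq.1 + pq.2 = n then F pq.1 ⊓ G pq.2 else (⊥ : Submodule k V)) ∧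
      (∀ p : ℤ, F p = ⨆ (p' : ℤ) (_ : p ≤ p'), F p' ⊓ G (n - p')) ∧
      (∀ q : ℤ, G q = ⨆ (q' : ℤ) (_ : q ≤ q'), F (n - q') ⊓ G q') := by
  obtain ⟨aF, haF⟩ := hFtop
  obtain ⟨bF, hbF⟩ := hFbot
  obtain ⟨aG, haG⟩ := hGtop
  obtain ⟨bG, hbG⟩ := hGbot
  have h : IsOpposed n F G := fun p q hpq =>
    comap_subtype_eq_top.mp (Submodule.Quotient.subsingleton_iff.mp (hopp p q hpq))
  have hFdec := h.eq_iSup_inf hF hG haG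
  refine ⟨?_, hFdec, fun q => ?_⟩
  · rw [DirectSum.isInternal_submodule_iff_iSupIndep_and_iSup_eq_top]
    exact ⟨h.iSupIndep_bigrading hF hG hbF hbG, iSup_bigrading_eq_top haF (hFdec aF)⟩
  · exact (h.symm.eq_iSup_inf hG hF haF q).trans
      (iSup_congr fun _ => iSup_congr fun _ => inf_comm _ _)

/-- If two finite decreasing exhaustive filtrations `F`, `G` of a finite-dimensional
vector space are `n`-opposed (`Gr_G^q Gr_F^p V = 0` for `p + q ≠ n`), then setting
`V^{p,q} = F^p ⊓ G^q` for `p + q = n` and `V^{p,q} = 0` otherwise, `V` is the internal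
direct sum of the `V^{p,q}`, and `F^p = ⊕_{p' ≥ p} V^{p',n-p'}`,
`G^q = ⊕_{q' ≥ q} V^{n-q',q'}`. -/
theorem opposed_filtrations_bigrading
    {k V : Type*} [Field k] [AddCommGroup V] [Module k V] [FiniteDimensional k V]
    (F G : ℤ → Submodule k V)
    (hF : ∀ p q : ℤ, p ≤ q → F q ≤ F p) (hG : ∀ p q : ℤ, p ≤ q → G q ≤ G p)
    (hFtop : ∃ a : ℤ, F a = ⊤) (hFbot : ∃ b : ℤ, F b = ⊥)
    (hGtop : ∃ a : ℤ, G a = ⊤) (hGbot : ∃ b : ℤ, G b = ⊥)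
    (n : ℤ)
    (hopp : ∀ p q : ℤ, p + q ≠ n →
      Subsingleton (↥(F p ⊓ G q) ⧸
        Submodule.comap (F p ⊓ G q).subtype ((F (p + 1) ⊓ G q) ⊔ (F p ⊓ G (q + 1))))) :
    DirectSum.IsInternal (fun pq : ℤ × ℤ =>
        if pq.1 + pq.2 = n then F pq.1 ⊓ G pq.2 else (⊥ : Submodule k V)) ∧
      (∀ p : ℤ, F p = ⨆ (p' : ℤ) (_ : p ≤ p'), F p' ⊓ G (n - p')) ∧
      (∀ q : ℤ, G q = ⨆ (q' : ℤ) (_ : q ≤ q'), F (n - q') ⊓ G q') :=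
  opposed_filtrations_bigrading_general F G hF hG hFtop hFbot hGtop hGbot n hopp
end

section
/- For any finite-dimensional vector space V equipped with two exhaustive decreasing filtrations F₁ and F₂, there exists a bigrading V = ⊕_{p,q} V^{p,q} compatible with both filtrations, i.e. F₁^p = ⊕_{a ≥ p, q} V^{a,q} and F₂^q = ⊕_{p, b ≥ q} V^{p,b} for all p, q. -/
/-!
Let `W^{p,q}` be a complement of `F₁^{p+1} ∩ F₂^q + F₁^p ∩ F₂^{q+1}` in `F₁^p ∩ F₂^q`.
Downward induction on `(p, q)`, starting where one filtration vanishes, gives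
`F₁^p ∩ F₂^q = Σ_{a ≥ p, b ≥ q} W^{a,b}`; choosing `q` (resp. `p`) where the other filtration
is everything yields the compatibility. The sum is direct: every piece lexicographically after
`(p, q)` lies in `F₁^{p+1} + F₁^p ∩ F₂^{q+1}`, whose intersection with `F₂^q` is, by the modular
law, exactly the subspace that `W^{p,q}` complements.
-/

theorem Int.induction_down {P : ℤ → Prop} {b : ℤ} (hge : ∀ n, b ≤ n → P n)
    (step : ∀ n, P (n + 1) → P n) (n : ℤ) : P n := by
  induction n using Int.inductionOn' (b := b) with
  | zero => exact hge b le_rfl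
  | succ k hk _ => exact hge _ (by omega)
  | pred k _ ih => exact step _ (by rwa [sub_add_cancel])

theorem iSupIndep_of_disjoint_iSup_gt {ι α : Type*} [LinearOrder ι] [CompleteLattice α]
    [IsModularLattice α] [IsCompactlyGenerated α] {f : ι → α}
    (h : ∀ i, Disjoint (f i) (⨆ j > i, f j)) : iSupIndep f := by
  classical
  refine iSupIndep_iff_supIndep.2 fun s => ?_
  induction s using Finset.induction_on_min with
  | empty => exact Finset.supIndep_empty f
  | insert i s hi ih =>
    exact ih.insert ((h i).mono_right (Finset.sup_le fun j hj => le_iSup₂_of_le j (hi j hj) le_rfl))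

section Bifiltration

variable {α : Type*} [CompleteLattice α] {F₁ F₂ : ℤ → α} {W : ℤ × ℤ → α}

theorem inf_eq_biSup_of_sup_eq (hF₁ : Antitone F₁) (hF₂ : Antitone F₂) {b₁ b₂ : ℤ}
    (hb₁ : F₁ b₁ = ⊥) (hb₂ : F₂ b₂ = ⊥)
    (hW : ∀ p q, F₁ (p + 1) ⊓ F₂ q ⊔ F₁ p ⊓ F₂ (q + 1) ⊔ W (p, q) = F₁ p ⊓ F₂ q) (p q : ℤ) :
    F₁ p ⊓ F₂ q = ⨆ (a : ℤ) (_ : p ≤ a) (b : ℤ) (_ : q ≤ b), W (a, b) := by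
  refine le_antisymm ?_ (iSup₂_le fun a ha => iSup₂_le fun b hb =>
    le_sup_right.trans_eq (hW a b) |>.trans (inf_le_inf (hF₁ ha) (hF₂ hb)))
  have hanti {p q p' q' : ℤ} (hp : p ≤ p') (hq : q ≤ q') :
      ⨆ (a : ℤ) (_ : p' ≤ a) (b : ℤ) (_ : q' ≤ b), W (a, b) ≤
        ⨆ (a : ℤ) (_ : p ≤ a) (b : ℤ) (_ : q ≤ b), W (a, b) :=
    iSup₂_le fun a ha => iSup₂_le fun b hb =>
      le_iSup₂_of_le a (hp.trans ha) (le_iSup₂_of_le b (hq.trans hb) le_rfl)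
  revert p q
  refine Int.induction_down (b := b₁) (fun p hp q => ?_) fun p ihp => Int.induction_down (b := b₂)
    (fun q hq => ?_) fun q ihq => ?_
  · exact (inf_le_left.trans (hb₁ ▸ hF₁ hp)).trans bot_le
  · exact (inf_le_right.trans (hb₂ ▸ hF₂ hq)).trans bot_le
  · rw [← hW p q]
    refine sup_le (sup_le ?_ ?_) (le_iSup₂_of_le p le_rfl (le_iSup₂_of_le q le_rfl le_rfl))
    · exact (ihp q).trans (hanti (lt_add_one _).le le_rfl)
    · exact ihq.trans (hanti le_rfl (lt_add_one _).le)

theorem iSupIndep_of_disjoint_of_sup_eq [IsModularLattice α] [IsCompactlyGenerated α]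
    (hF₁ : Antitone F₁) (hF₂ : Antitone F₂)
    (hW_disj : ∀ p q, Disjoint (F₁ (p + 1) ⊓ F₂ q ⊔ F₁ p ⊓ F₂ (q + 1)) (W (p, q)))
    (hW_sup : ∀ p q, F₁ (p + 1) ⊓ F₂ q ⊔ F₁ p ⊓ F₂ (q + 1) ⊔ W (p, q) = F₁ p ⊓ F₂ q) :
    iSupIndep W := by
  have hW_le (p q : ℤ) : W (p, q) ≤ F₁ p ⊓ F₂ q := le_sup_right.trans_eq (hW_sup p q)
  have hdisj_later (p q : ℤ) : Disjoint (W (p, q)) (⨆ j > toLex (p, q), W (ofLex j)) := by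
    have hlater : ⨆ j > toLex (p, q), W (ofLex j) ≤ F₁ (p + 1) ⊔ F₁ p ⊓ F₂ (q + 1) := by
      refine iSup₂_le fun j hj => ?_
      obtain ⟨⟨a, b⟩, rfl⟩ := toLex.surjective j
      rcases Prod.Lex.toLex_lt_toLex.1 hj with ha | ⟨rfl, hb⟩
      · exact le_sup_of_le_left ((hW_le a b).trans (inf_le_left.trans (hF₁ ha)))
      · exact le_sup_of_le_right ((hW_le p b).trans (inf_le_inf_left _ (hF₂ hb)))
    have hmod : F₂ q ⊓ (F₁ (p + 1) ⊔ F₁ p ⊓ F₂ (q + 1)) =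
        F₁ (p + 1) ⊓ F₂ q ⊔ F₁ p ⊓ F₂ (q + 1) := by
      rw [← inf_sup_assoc_of_le _ (inf_le_right.trans (hF₂ (lt_add_one _).le)), inf_comm]
    refine disjoint_iff_inf_le.2 (le_trans ?_ (hW_disj p q).le_bot)
    rw [← hmod]
    exact le_inf (le_inf (inf_le_left.trans ((hW_le p q).trans inf_le_right))
      (inf_le_right.trans hlater)) inf_le_left
  exact (iSupIndep_of_disjoint_iSup_gt fun i => hdisj_later (ofLex i).1 (ofLex i).2).comp'
    ofLex.surjective

theorem exists_bigrading_of_antitone [IsModularLattice α] [ComplementedLattice α]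
    [IsCompactlyGenerated α] (hF₁ : Antitone F₁) (hF₂ : Antitone F₂) {a₁ b₁ a₂ b₂ : ℤ}
    (ha₁ : F₁ a₁ = ⊤) (hb₁ : F₁ b₁ = ⊥) (ha₂ : F₂ a₂ = ⊤) (hb₂ : F₂ b₂ = ⊥) :
    ∃ W : ℤ × ℤ → α, iSupIndep W ∧ iSup W = ⊤ ∧
      (∀ p : ℤ, F₁ p = ⨆ (a : ℤ) (_ : p ≤ a), ⨆ q : ℤ, W (a, q)) ∧
      (∀ q : ℤ, F₂ q = ⨆ (b : ℤ) (_ : q ≤ b), ⨆ p : ℤ, W (p, b)) := by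
  choose W hW_disj hW_sup using fun i : ℤ × ℤ => IsModularLattice.exists_disjoint_and_sup_eq
    (sup_le (inf_le_inf_right (F₂ i.2) (hF₁ (lt_add_one i.1).le))
      (inf_le_inf_left (F₁ i.1) (hF₂ (lt_add_one i.2).le)))
  have hW_le (p q : ℤ) : W (p, q) ≤ F₁ p ⊓ F₂ q := le_sup_right.trans_eq (hW_sup (p, q))
  have hG := inf_eq_biSup_of_sup_eq hF₁ hF₂ hb₁ hb₂ fun p q => hW_sup (p, q)
  have hW₁ (p : ℤ) : F₁ p = ⨆ (a : ℤ) (_ : p ≤ a), ⨆ q : ℤ, W (a, q) := by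
    refine le_antisymm ?_ (iSup₂_le fun a ha => iSup_le fun q =>
      (hW_le a q).trans (inf_le_left.trans (hF₁ ha)))
    rw [← inf_top_eq (F₁ p), ← ha₂, hG]
    exact iSup₂_mono fun a _ => iSup₂_le fun b _ => le_iSup (fun q => W (a, q)) b
  have hW₂ (q : ℤ) : F₂ q = ⨆ (b : ℤ) (_ : q ≤ b), ⨆ p : ℤ, W (p, b) := by
    refine le_antisymm ?_ (iSup₂_le fun b hb => iSup_le fun p =>
      (hW_le p b).trans (inf_le_right.trans (hF₂ hb)))
    rw [← top_inf_eq (F₂ q), ← ha₁, hG]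
    exact iSup₂_le fun a _ => iSup₂_le fun b hb =>
      le_iSup₂_of_le b hb (le_iSup (fun p => W (p, b)) a)
  refine ⟨W, iSupIndep_of_disjoint_of_sup_eq hF₁ hF₂ (fun p q => hW_disj (p, q))
    (fun p q => hW_sup (p, q)), ?_, hW₁, hW₂⟩
  rw [eq_top_iff, ← ha₁, hW₁]
  exact iSup₂_le fun a _ => iSup_le fun q => le_iSup W (a, q)

end Bifiltration

theorem exists_compatible_bigrading_general
    {k V : Type*} [Field k] [AddCommGroup V] [Module k V]
    (F₁ F₂ : ℤ → Submodule k V)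
    (h₁ : ∀ p q : ℤ, p ≤ q → F₁ q ≤ F₁ p) (h₂ : ∀ p q : ℤ, p ≤ q → F₂ q ≤ F₂ p)
    (h₁top : ∃ a : ℤ, F₁ a = ⊤) (h₁bot : ∃ b : ℤ, F₁ b = ⊥)
    (h₂top : ∃ a : ℤ, F₂ a = ⊤) (h₂bot : ∃ b : ℤ, F₂ b = ⊥) :
    ∃ W : ℤ × ℤ → Submodule k V,
      DirectSum.IsInternal W ∧
        (∀ p : ℤ, F₁ p = ⨆ (a : ℤ) (_ : p ≤ a), ⨆ q : ℤ, W (a, q)) ∧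
        (∀ q : ℤ, F₂ q = ⨆ (b : ℤ) (_ : q ≤ b), ⨆ p : ℤ, W (p, b)) := by
  obtain ⟨a₁, ha₁⟩ := h₁top
  obtain ⟨b₁, hb₁⟩ := h₁bot
  obtain ⟨a₂, ha₂⟩ := h₂top
  obtain ⟨b₂, hb₂⟩ := h₂bot
  obtain ⟨W, hW_indep, hW_top, hW₁, hW₂⟩ :=
    exists_bigrading_of_antitone (h₁ · ·) (h₂ · ·) ha₁ hb₁ ha₂ hb₂
  exact ⟨W, (DirectSum.isInternal_submodule_iff_iSupIndep_and_iSup_eq_top W).2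
    ⟨hW_indep, hW_top⟩, hW₁, hW₂⟩

/-- For any finite-dimensional vector space with two exhaustive decreasing filtrations
`F₁`, `F₂`, there exists a bigrading `V = ⊕_{p,q} V^{p,q}` compatible with both
filtrations: `F₁^p = ⊕_{a ≥ p, q} V^{a,q}` and `F₂^q = ⊕_{p, b ≥ q} V^{p,b}`. -/
theorem exists_compatible_bigrading
    {k V : Type*} [Field k] [AddCommGroup V] [Module k V] [FiniteDimensional k V]
    (F₁ F₂ : ℤ → Submodule k V)
    (h₁ : ∀ p q : ℤ, p ≤ q → F₁ q ≤ F₁ p) (h₂ : ∀ p q : ℤ, p ≤ q → F₂ q ≤ F₂ p)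
    (h₁top : ∃ a : ℤ, F₁ a = ⊤) (h₁bot : ∃ b : ℤ, F₁ b = ⊥)
    (h₂top : ∃ a : ℤ, F₂ a = ⊤) (h₂bot : ∃ b : ℤ, F₂ b = ⊥) :
    ∃ W : ℤ × ℤ → Submodule k V,
      DirectSum.IsInternal W ∧
        (∀ p : ℤ, F₁ p = ⨆ (a : ℤ) (_ : p ≤ a), ⨆ q : ℤ, W (a, q)) ∧
        (∀ q : ℤ, F₂ q = ⨆ (b : ℤ) (_ : q ≤ b), ⨆ p : ℤ, W (p, b)) :=
  exists_compatible_bigrading_general F₁ F₂ h₁ h₂ h₁top h₁bot h₂top h₂bot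
end

section
/- There exist a 2-dimensional vector space V over a field k (with at least 3 elements) and three exhaustive decreasing filtrations F₁, F₂, F₃ of V such that no grading of V is simultaneously compatible with all three filtrations. Concretely, take V = k², F_i^0 = V, F_i^1 a line L_i, F_i^2 = 0, with L₁, L₂, L₃ three pairwise distinct lines; then there is no decomposition V = ⊕ V^{i,j,l} compatible with the three filtrations. -/
open Submodule

/-- There exist, on the 2-dimensional space `V = k²` over a field `k` with at least
three elements, three exhaustive decreasing filtrations (each with `F^p = V` for
`p ≤ 0`, `F^1` a line, `F^p = 0` for `p ≥ 2`, the three lines pairwise distinct)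
such that no multigrading of `V` is simultaneously compatible with all three
filtrations (compatibility: `F_i^p = ⊕_{t, t i ≥ p} D t`). -/
theorem three_filtrations_not_simultaneously_split
    (k : Type*) [Field k] (h3 : ∃ x y z : k, x ≠ y ∧ x ≠ z ∧ y ≠ z) :
    ∃ F : Fin 3 → ℤ → Submodule k (Fin 2 → k),
      (∀ i, ∀ p q : ℤ, p ≤ q → F i q ≤ F i p) ∧
      (∀ i, ∀ p : ℤ, p ≤ 0 → F i p = ⊤) ∧
      (∀ i, ∀ p : ℤ, 2 ≤ p → F i p = ⊥) ∧
      (∀ i, Module.finrank k ↥(F i 1) = 1) ∧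
      (∀ i j, i ≠ j → F i 1 ≠ F j 1) ∧
      ¬ ∃ D : (Fin 3 → ℤ) → Submodule k (Fin 2 → k),
          DirectSum.IsInternal D ∧
            ∀ i, ∀ p : ℤ, F i p = ⨆ (t : Fin 3 → ℤ) (_ : p ≤ t i), D t := by
  classical
  set v : Fin 3 → (Fin 2 → k) := ![![1,0], ![0,1], ![1,1]] with hv
  set L : Fin 3 → Submodule k (Fin 2 → k) := fun i => span k {v i} with hL
  have hvne : ∀ i, v i ≠ 0 := by
    intro i h
    fin_cases i <;>
    · have h0 := congrFun h 0
      have h1 := congrFun h 1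
      simp [hv] at h0 h1
  have hrank : ∀ i, Module.finrank k ↥(L i) = 1 := by
    intro i
    simpa [hL] using finrank_span_singleton (hvne i)
  have hLne : ∀ i, L i ≠ ⊥ := by
    intro i h
    have := hrank i
    rw [h] at this
    simp at this
  -- distinctness of the lines
  have hmem : ∀ i j, i ≠ j → v j ∉ L i := by
    intro i j hij hm
    rw [hL, mem_span_singleton] at hm
    obtain ⟨a, ha⟩ := hm
    have h0 := congrFun ha 0
    have h1 := congrFun ha 1
    fin_cases i <;> fin_cases j <;> simp [hv] at h0 h1 <;> simp_all [Matrix.vecHead, Matrix.vecTail]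
  have hne : ∀ i j, i ≠ j → L i ≠ L j := by
    intro i j hij h
    exact hmem i j hij (h ▸ subset_span rfl)
  -- pairwise inf is ⊥, pairwise sup is ⊤
  have hinf : ∀ i j, i ≠ j → L i ⊓ L j = ⊥ := by
    intro i j hij
    by_contra h
    have h1 : 1 ≤ Module.finrank k ↥(L i ⊓ L j) := by
      rw [Nat.one_le_iff_ne_zero]
      intro h0
      exact h (Submodule.finrank_eq_zero.mp h0)
    have hi : L i ⊓ L j = L i :=
      eq_of_le_of_finrank_le inf_le_left (by rw [hrank i]; exact h1)
    have hj : L i ⊓ L j = L j :=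
      eq_of_le_of_finrank_le inf_le_right (by rw [hrank j]; exact h1)
    exact hne i j hij (hi ▸ hj)
  have hsup : ∀ i j, i ≠ j → L i ⊔ L j = ⊤ := by
    intro i j hij
    apply Submodule.eq_top_of_finrank_eq
    have := Submodule.finrank_sup_add_finrank_inf_eq (L i) (L j)
    rw [hinf i j hij, hrank i, hrank j] at this
    simp only [finrank_bot, add_zero] at this
    rw [this, Module.finrank_fintype_fun_eq_card, Fintype.card_fin]
  -- the filtrations
  refine ⟨fun i p => if p ≤ 0 then ⊤ else if p ≤ 1 then L i else ⊥, ?_, ?_, ?_, ?_, ?_, ?_⟩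
  · intro i p q hpq
    dsimp only
    split_ifs <;> first | exact le_refl _ | exact bot_le | exact le_top | omega
  · intro i p hp; simp [hp]
  · intro i p hp
    have h1 : ¬ p ≤ 0 := by omega
    have h2 : ¬ p ≤ 1 := by omega
    simp [h1, h2]
  · intro i; simpa using hrank i
  · intro i j hij; simpa using hne i j hij
  · rintro ⟨D, hD, hC⟩
    have hS : ∀ i, L i = ⨆ (t : Fin 3 → ℤ) (_ : (1:ℤ) ≤ t i), D t := by
      intro i
      have := hC i 1
      simpa using this
    -- for each i there is t with 1 ≤ t i and D t ≠ ⊥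
    have hex : ∀ i, ∃ t : Fin 3 → ℤ, 1 ≤ t i ∧ D t ≠ ⊥ := by
      intro i
      by_contra h
      push_neg at h
      apply hLne i
      rw [hS i]
      apply le_bot_iff.mp
      refine iSup₂_le fun t ht => ?_
      rw [h t ht]
    obtain ⟨t0, ht0, hDt0⟩ := hex 0
    have hDle : ∀ i, 1 ≤ t0 i → D t0 ≤ L i := by
      intro i hi
      rw [hS i]
      exact le_iSup₂ (f := fun t _ => D t) t0 hi
    have hnot : ∀ i : Fin 3, i ≠ 0 → ¬ (1 ≤ t0 i) := by
      intro i hi hle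
      apply hDt0
      have := le_inf (hDle 0 ht0) (hDle i hle)
      rwa [hinf 0 i (Ne.symm hi), le_bot_iff] at this
    have hdisj := hD.submodule_iSupIndep t0
    have key : ∀ j : Fin 3, j ≠ 0 → L j ≤ ⨆ (s : Fin 3 → ℤ) (_ : s ≠ t0), D s := by
      intro j hj
      rw [hS j]
      refine iSup₂_le fun s hs => ?_
      refine le_iSup₂ (f := fun s _ => D s) s ?_
      rintro rfl
      exact hnot j hj hs
    have htop : L 1 ⊔ L 2 ≤ ⨆ (s : Fin 3 → ℤ) (_ : s ≠ t0), D s :=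
      sup_le (key 1 (by decide)) (key 2 (by decide))
    rw [hsup 1 2 (by decide)] at htop
    exact hDt0 (disjoint_top.mp (hdisj.mono_right htop))
end

section
/- Let V = V₁ ⊕ V₂, let π: V → V₂ be the projection and i: V₁ → V the inclusion. Let W₁, W₁' ⊆ V₁ and W₂, W₂' ⊆ V₂, and suppose W, W' ⊆ V satisfy i(W₁) = W ∩ V₁, i(W₁') = W' ∩ V₁, π(W) = W₂, π(W') = W₂'. Then dim(W₁ ∩ W₁') + dim(W₂ ∩ W₂') − min(dim(W₂ ∩ W₂'), dim V₁) ≤ dim(W ∩ W') ≤ dim(W₁ ∩ W₁') + dim(W₂ ∩ W₂'). -/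
open Submodule Module

private lemma finrank_eq_map_add_inf_ker {k M N : Type*} [Field k]
    [AddCommGroup M] [Module k M] [AddCommGroup N] [Module k N]
    [FiniteDimensional k M]
    (f : M →ₗ[k] N) (U : Submodule k M) :
    finrank k U = finrank k (Submodule.map f U) + finrank k ↥(U ⊓ LinearMap.ker f) := by
  have h := LinearMap.finrank_range_add_finrank_ker (f.domRestrict U)
  rw [LinearMap.range_domRestrict, LinearMap.ker_domRestrict] at h
  have hc : Submodule.comap U.subtype (LinearMap.ker f)
      = Submodule.comap U.subtype (U ⊓ LinearMap.ker f) := by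
    ext x
    simp only [Submodule.mem_comap, Submodule.mem_inf, LinearMap.mem_ker]
    exact ⟨fun h => ⟨x.2, h⟩, fun h => h.2⟩
  rw [hc] at h
  have h2 := LinearEquiv.finrank_eq
    (Submodule.comapSubtypeEquivOfLe (inf_le_left : U ⊓ LinearMap.ker f ≤ U))
  omega

/-- Let `V = V₁ ⊕ V₂`, `i : V₁ → V` the inclusion, `π : V → V₂` the projection.
If `W, W'` induce `W₁, W₁'` on `V₁` (`i(W₁) = W ∩ V₁`, etc.) and project onto
`W₂, W₂'`, then
`dim(W₁∩W₁') + dim(W₂∩W₂') − min(dim(W₂∩W₂'), dim V₁) ≤ dim(W∩W')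
  ≤ dim(W₁∩W₁') + dim(W₂∩W₂')`. -/
theorem dim_inter_bounds_of_extension
    {k V₁ V₂ : Type*} [Field k]
    [AddCommGroup V₁] [Module k V₁] [AddCommGroup V₂] [Module k V₂]
    [FiniteDimensional k V₁] [FiniteDimensional k V₂]
    (W₁ W₁' : Submodule k V₁) (W₂ W₂' : Submodule k V₂)
    (W W' : Submodule k (V₁ × V₂))
    (hW₁ : Submodule.map (LinearMap.inl k V₁ V₂) W₁ =
      W ⊓ LinearMap.range (LinearMap.inl k V₁ V₂))
    (hW₁' : Submodule.map (LinearMap.inl k V₁ V₂) W₁' =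
      W' ⊓ LinearMap.range (LinearMap.inl k V₁ V₂))
    (hW₂ : Submodule.map (LinearMap.snd k V₁ V₂) W = W₂)
    (hW₂' : Submodule.map (LinearMap.snd k V₁ V₂) W' = W₂') :
    (finrank k ↥(W₁ ⊓ W₁') : ℤ) + (finrank k ↥(W₂ ⊓ W₂') : ℤ) -
        min (finrank k ↥(W₂ ⊓ W₂') : ℤ) (finrank k V₁ : ℤ) ≤
      (finrank k ↥(W ⊓ W') : ℤ) ∧
      (finrank k ↥(W ⊓ W') : ℤ) ≤
        (finrank k ↥(W₁ ⊓ W₁') : ℤ) + (finrank k ↥(W₂ ⊓ W₂') : ℤ) := by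
  set i := LinearMap.inl k V₁ V₂ with hi
  set π := LinearMap.snd k V₁ V₂ with hπ
  have hinj : Function.Injective i := LinearMap.inl_injective
  have hker : LinearMap.ker π = LinearMap.range i := LinearMap.ker_snd k V₁ V₂
  have hfin_map : ∀ p : Submodule k V₁, finrank k (Submodule.map i p) = finrank k p :=
    fun p => (Submodule.equivMapOfInjective i hinj p).finrank_eq.symm
  -- intersection with V₁ part
  have hinter : W ⊓ W' ⊓ LinearMap.range i = Submodule.map i (W₁ ⊓ W₁') := by
    rw [Submodule.map_inf i hinj, hW₁, hW₁', inf_inf_distrib_right]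
  -- lower bound a : map i (W₁ ⊓ W₁') ≤ W ⊓ W'
  have hlba : finrank k ↥(W₁ ⊓ W₁') ≤ finrank k ↥(W ⊓ W') := by
    rw [← hfin_map (W₁ ⊓ W₁'), ← hinter]
    exact Submodule.finrank_mono inf_le_left
  -- upper bound
  have hub : finrank k ↥(W ⊓ W') ≤ finrank k ↥(W₁ ⊓ W₁') + finrank k ↥(W₂ ⊓ W₂') := by
    have h := finrank_eq_map_add_inf_ker π (W ⊓ W')
    rw [hker, hinter, hfin_map] at h
    have hle : Submodule.map π (W ⊓ W') ≤ W₂ ⊓ W₂' := by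
      rw [← hW₂, ← hW₂']
      exact le_inf (Submodule.map_mono inf_le_left) (Submodule.map_mono inf_le_right)
    have := Submodule.finrank_mono hle
    omega
  -- lower bound b
  set P := Submodule.comap π (W₂ ⊓ W₂') with hP
  have hranile : LinearMap.range i ≤ P := by
    rw [← hker]; exact fun x hx => by simp [hP, (LinearMap.mem_ker).mp hx]
  have hmapT : ∀ (A : Submodule k (V₁ × V₂)) (B : Submodule k V₂),
      Submodule.map π A = B → W₂ ⊓ W₂' ≤ B →
      Submodule.map π (A ⊓ P) = W₂ ⊓ W₂' := by
    intro A B hA hB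
    apply le_antisymm
    · refine le_trans (Submodule.map_mono inf_le_right) ?_
      exact Submodule.map_comap_le _ _
    · intro y hy
      have : y ∈ B := hB hy
      rw [← hA] at this
      obtain ⟨w, hw, rfl⟩ := this
      exact ⟨w, ⟨hw, hy⟩, rfl⟩
  have hdim : ∀ (A : Submodule k (V₁ × V₂)) (A₁ : Submodule k V₁),
      W₂ ⊓ W₂' ≤ Submodule.map π A → A ⊓ LinearMap.range i = Submodule.map i A₁ →
      finrank k ↥(A ⊓ P) = finrank k ↥(W₂ ⊓ W₂') + finrank k A₁ := by
    intro A A₁ hge hA₁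
    have h := finrank_eq_map_add_inf_ker π (A ⊓ P)
    rw [hker] at h
    have h1 : A ⊓ P ⊓ LinearMap.range i = Submodule.map i A₁ := by
      rw [inf_assoc, inf_of_le_right hranile, hA₁]
    have h2 : Submodule.map π (A ⊓ P) = W₂ ⊓ W₂' :=
      hmapT A (Submodule.map π A) rfl hge
    rw [h1, h2, hfin_map] at h
    -- h : finrank (A ⊓ P) = finrank (W₂⊓W₂') + finrank A₁
    exact h
  have hTW : finrank k ↥(W ⊓ P) = finrank k ↥(W₂ ⊓ W₂') + finrank k W₁ :=
    hdim W W₁ (hW₂ ▸ inf_le_left) hW₁.symm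
  have hTW' : finrank k ↥(W' ⊓ P) = finrank k ↥(W₂ ⊓ W₂') + finrank k W₁' :=
    hdim W' W₁' (hW₂' ▸ inf_le_right) hW₁'.symm
  -- dim P
  have hPdim : finrank k P = finrank k ↥(W₂ ⊓ W₂') + finrank k V₁ := by
    have h := finrank_eq_map_add_inf_ker π P
    rw [hker] at h
    have h1 : P ⊓ LinearMap.range i = Submodule.map i ⊤ := by
      rw [inf_of_le_right hranile, Submodule.map_top]
    have h2 : Submodule.map π P = W₂ ⊓ W₂' :=
      Submodule.map_comap_eq_of_surjective (fun y => ⟨(0, y), rfl⟩) _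
    rw [h1, h2, hfin_map, finrank_top] at h
    exact h
  -- sup/inf
  have hsup := Submodule.finrank_sup_add_finrank_inf_eq (W ⊓ P) (W' ⊓ P)
  have hsuple : finrank k ↥(W ⊓ P ⊔ W' ⊓ P) ≤ finrank k P :=
    Submodule.finrank_mono (sup_le inf_le_right inf_le_right)
  have hinfle : finrank k ↥(W ⊓ P ⊓ (W' ⊓ P)) ≤ finrank k ↥(W ⊓ W') :=
    Submodule.finrank_mono (le_inf (inf_le_left.trans inf_le_left)
      (inf_le_right.trans inf_le_left))
  have hW₁le : finrank k ↥(W₁ ⊓ W₁') ≤ finrank k W₁ := Submodule.finrank_mono inf_le_left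
  constructor <;> [skip; exact_mod_cast hub]
  have : finrank k ↥(W₁ ⊓ W₁') + finrank k ↥(W₂ ⊓ W₂') ≤
      finrank k ↥(W ⊓ W') + finrank k V₁ := by omega
  omega
end

section
/- Let V = ℂ² with basis (e, f) and filtrations: W^{−2} = V, W^{−1} = W^0 = ⟨e⟩, W^1 = 0; F^0 = V, F^1 = ⟨f + λe⟩, F^2 = 0; G^0 = V, G^1 = ⟨f + κe⟩, G^2 = 0, where λ, κ ∈ ℂ. These three filtrations are opposed, and with h^{p,q} = dim Gr_G^q Gr_F^p Gr_W^{−p−q} V, s^{p,q} = dim Gr_G^q Gr_F^p V one has: (1/2)∑_{p,q}(p+q)²(h^{p,q} − s^{p,q}) = 0 if λ = κ and = 1 if λ ≠ κ. -/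
noncomputable section

open Submodule

/-- `s^{p,q} = dim_ℂ Gr_{F̄}^q Gr_F^p H`, realized via the canonical (Zassenhaus)
isomorphism as `(F^p ⊓ F̄^q)/((F^{p+1} ⊓ F̄^q) ⊔ (F^p ⊓ F̄^{q+1}))`. -/
def sdim {V : Type*} [AddCommGroup V] [Module ℂ V]
    (F G : ℤ → Submodule ℂ V) (p q : ℤ) : ℕ :=
  Module.finrank ℂ
    (↥(F p ⊓ G q) ⧸
      Submodule.comap (F p ⊓ G q).subtype ((F (p + 1) ⊓ G q) ⊔ (F p ⊓ G (q + 1))))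

/-- The numerator of `Gr_{F̄}^q Gr_F^p Gr_W^{-p-q} H` transported to the ambient space:
under the lattice isomorphism between submodules of `V/W^{n+1}` and submodules of `V`
containing `W^{n+1}` (with `n = -p-q`), the induced filtrations on
`Gr_W^n = W^n/W^{n+1}` correspond to `(F^p ⊓ W^n) ⊔ W^{n+1}` etc. -/
def hNum {V : Type*} [AddCommGroup V] [Module ℂ V]
    (W F G : ℤ → Submodule ℂ V) (p q : ℤ) : Submodule ℂ V :=
  ((F p ⊓ W (-p - q)) ⊔ W (-p - q + 1)) ⊓ ((G q ⊓ W (-p - q)) ⊔ W (-p - q + 1))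

/-- The denominator of `Gr_{F̄}^q Gr_F^p Gr_W^{-p-q} H` transported to the ambient
space. -/
def hDen {V : Type*} [AddCommGroup V] [Module ℂ V]
    (W F G : ℤ → Submodule ℂ V) (p q : ℤ) : Submodule ℂ V :=
  (((F (p + 1) ⊓ W (-p - q)) ⊔ W (-p - q + 1)) ⊓ ((G q ⊓ W (-p - q)) ⊔ W (-p - q + 1))) ⊔
    (((F p ⊓ W (-p - q)) ⊔ W (-p - q + 1)) ⊓ ((G (q + 1) ⊓ W (-p - q)) ⊔ W (-p - q + 1)))

/-- The Hodge number `h^{p,q} = dim_ℂ Gr_{F̄}^q Gr_F^p Gr_W^{-p-q} H`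
(for the decreasing reindexing `W^n = W_{-n}` of the weight filtration). -/
def hdim {V : Type*} [AddCommGroup V] [Module ℂ V]
    (W F G : ℤ → Submodule ℂ V) (p q : ℤ) : ℕ :=
  Module.finrank ℂ
    (↥(hNum W F G p q) ⧸ Submodule.comap (hNum W F G p q).subtype (hDen W F G p q))

/-- Three (decreasing) filtrations `W, F, G` are opposed:
`Gr_F^p Gr_G^q Gr_W^n V = 0` whenever `p + q + n ≠ 0`; the vanishing of the iterated
graded piece is expressed in the ambient space as above. -/
def Opposed {V : Type*} [AddCommGroup V] [Module ℂ V]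
    (W F G : ℤ → Submodule ℂ V) : Prop :=
  ∀ p q n : ℤ, p + q + n ≠ 0 →
    ((F p ⊓ W n) ⊔ W (n + 1)) ⊓ ((G q ⊓ W n) ⊔ W (n + 1)) ≤
      (((F (p + 1) ⊓ W n) ⊔ W (n + 1)) ⊓ ((G q ⊓ W n) ⊔ W (n + 1))) ⊔
        (((F p ⊓ W n) ⊔ W (n + 1)) ⊓ ((G (q + 1) ⊓ W n) ⊔ W (n + 1)))

/-- The `ℝ`-split level
`α(H) = (1/2) ∑_{p,q} (p+q)² (h^{p,q} − s^{p,q})` of a trifiltered space. -/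
def alphaQ {V : Type*} [AddCommGroup V] [Module ℂ V]
    (W F G : ℤ → Submodule ℂ V) : ℚ :=
  (1 / 2 : ℚ) *
    ∑ᶠ pq : ℤ × ℤ,
      ((((pq.1 + pq.2) ^ 2 * ((hdim W F G pq.1 pq.2 : ℤ) - (sdim F G pq.1 pq.2 : ℤ))) : ℤ) : ℚ)

/-- The basis vector `e` of `V = ℂ²`. -/
def eVec : Fin 2 → ℂ := ![1, 0]

/-- The basis vector `f` of `V = ℂ²`. -/
def fVec : Fin 2 → ℂ := ![0, 1]

/-- The (decreasing) weight filtration: `W^{-2} = V`, `W^{-1} = W^0 = ⟨e⟩`, `W^1 = 0`. -/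
def Wex : ℤ → Submodule ℂ (Fin 2 → ℂ) := fun n =>
  if n ≤ -2 then ⊤ else if n ≤ 0 then Submodule.span ℂ {eVec} else ⊥

/-- `F^0 = V`, `F^1 = ⟨f + λe⟩`, `F^2 = 0`. -/
def Fex (lam : ℂ) : ℤ → Submodule ℂ (Fin 2 → ℂ) := fun p =>
  if p ≤ 0 then ⊤ else if p = 1 then Submodule.span ℂ {fVec + lam • eVec} else ⊥

/-- `G^0 = V`, `G^1 = ⟨f + κe⟩`, `G^2 = 0`. -/
def Gex (kap : ℂ) : ℤ → Submodule ℂ (Fin 2 → ℂ) := fun q =>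
  if q ≤ 0 then ⊤ else if q = 1 then Submodule.span ℂ {fVec + kap • eVec} else ⊥

open Module

abbrev Ee : Submodule ℂ (Fin 2 → ℂ) := Submodule.span ℂ {eVec}
abbrev Lv (lam : ℂ) : Submodule ℂ (Fin 2 → ℂ) := Submodule.span ℂ {fVec + lam • eVec}

lemma eVec_ne : eVec ≠ 0 := by
  intro h
  have := congrFun h 0
  simp [eVec] at this

lemma lvec_ne (lam : ℂ) : fVec + lam • eVec ≠ 0 := by
  intro h
  have := congrFun h 1
  simp [eVec, fVec] at this

lemma finrank_Ee : finrank ℂ Ee = 1 := finrank_span_singleton eVec_ne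

lemma finrank_Lv (lam : ℂ) : finrank ℂ (Lv lam) = 1 := finrank_span_singleton (lvec_ne lam)

lemma finrank_top2 : finrank ℂ (⊤ : Submodule ℂ (Fin 2 → ℂ)) = 2 := by
  simp [finrank_top, Module.finrank_fin_fun]

lemma sup_Lv_Ee (lam : ℂ) : Lv lam ⊔ Ee = ⊤ := by
  rw [eq_top_iff]
  rintro x -
  have hx : x = (x 1) • (fVec + lam • eVec) + (x 0 - lam * x 1) • eVec := by
    funext i
    fin_cases i <;> simp [eVec, fVec] <;> ring
  rw [hx]
  exact add_mem_sup (smul_mem _ _ (mem_span_singleton_self _))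
    (smul_mem _ _ (mem_span_singleton_self _))

lemma inf_Lv_Ee (lam : ℂ) : Lv lam ⊓ Ee = ⊥ := by
  rw [eq_bot_iff]
  rintro x ⟨h1, h2⟩
  obtain ⟨a, ha⟩ := mem_span_singleton.mp h1
  obtain ⟨b, hb⟩ := mem_span_singleton.mp h2
  have h1' := congrFun ha 1
  have h2' := congrFun hb 1
  simp [eVec, fVec] at h1' h2'
  rw [mem_bot, ← ha, h1', ← h2']
  simp

lemma inf_Lv_Lv {lam kap : ℂ} (h : lam ≠ kap) : Lv lam ⊓ Lv kap = ⊥ := by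
  rw [eq_bot_iff]
  rintro x ⟨h1, h2⟩
  obtain ⟨a, ha⟩ := mem_span_singleton.mp h1
  obtain ⟨b, hb⟩ := mem_span_singleton.mp h2
  have e1 := congrFun (ha.trans hb.symm) 1
  have e0 := congrFun (ha.trans hb.symm) 0
  simp [eVec, fVec] at e1 e0
  subst e1
  have : a = 0 := by
    rcases mul_eq_mul_left_iff.mp e0 with h' | h'
    · exact absurd h' h
    · exact h'
  rw [mem_bot, ← ha, this]
  simp

lemma sup_Lv_Lv {lam kap : ℂ} (h : lam ≠ kap) : Lv lam ⊔ Lv kap = ⊤ := by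
  rw [eq_top_iff, ← sup_Lv_Ee lam]
  refine sup_le le_sup_left ?_
  rw [span_le, Set.singleton_subset_iff]
  have he : eVec = (lam - kap)⁻¹ • ((fVec + lam • eVec) - (fVec + kap • eVec)) := by
    have hne : lam - kap ≠ 0 := sub_ne_zero.mpr h
    funext i
    fin_cases i <;> simp [eVec, fVec] <;> field_simp <;> ring
  rw [he]
  exact smul_mem _ _ (sub_mem (mem_sup_left (mem_span_singleton_self _))
    (mem_sup_right (mem_span_singleton_self _)))

lemma quotdim {V : Type*} [AddCommGroup V] [Module ℂ V] [FiniteDimensional ℂ V]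
    (S T : Submodule ℂ V) (h : T ≤ S) :
    finrank ℂ (↥S ⧸ Submodule.comap S.subtype T) = finrank ℂ S - finrank ℂ T := by
  have h1 := Submodule.finrank_quotient_add_finrank (Submodule.comap S.subtype T)
  rw [(Submodule.comapSubtypeEquivOfLe h).finrank_eq] at h1
  omega

-- filtration values

lemma Wex_le2 {n : ℤ} (h : n ≤ -2) : Wex n = ⊤ := by simp [Wex, h]

lemma Wex_mid {n : ℤ} (h1 : -1 ≤ n) (h2 : n ≤ 0) : Wex n = Ee := by
  have : ¬ n ≤ -2 := by omega
  simp [Wex, this, h2]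

lemma Wex_pos {n : ℤ} (h : 1 ≤ n) : Wex n = ⊥ := by
  have h1 : ¬ n ≤ -2 := by omega
  have h2 : ¬ n ≤ 0 := by omega
  simp [Wex, h1, h2]

lemma Fex_np (lam : ℂ) {p : ℤ} (h : p ≤ 0) : Fex lam p = ⊤ := by simp [Fex, h]

lemma Fex_one (lam : ℂ) : Fex lam 1 = Lv lam := by norm_num [Fex]

lemma Fex_ge2 (lam : ℂ) {p : ℤ} (h : 2 ≤ p) : Fex lam p = ⊥ := by
  have h1 : ¬ p ≤ 0 := by omega
  have h2 : p ≠ 1 := by omega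
  simp [Fex, h1, h2]

lemma Gex_np (kap : ℂ) {q : ℤ} (h : q ≤ 0) : Gex kap q = ⊤ := by simp [Gex, h]

lemma Gex_one (kap : ℂ) : Gex kap 1 = Lv kap := by norm_num [Gex]

lemma Gex_ge2 (kap : ℂ) {q : ℤ} (h : 2 ≤ q) : Gex kap q = ⊥ := by
  have h1 : ¬ q ≤ 0 := by omega
  have h2 : q ≠ 1 := by omega
  simp [Gex, h1, h2]

lemma Fex_anti (lam : ℂ) (p : ℤ) : Fex lam (p + 1) ≤ Fex lam p := by
  rcases le_or_gt p 0 with h | h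
  · rw [Fex_np lam h]; exact le_top
  · rw [Fex_ge2 lam (by omega : 2 ≤ p + 1)]; exact bot_le

lemma Gex_anti (kap : ℂ) (q : ℤ) : Gex kap (q + 1) ≤ Gex kap q := by
  rcases le_or_gt q 0 with h | h
  · rw [Gex_np kap h]; exact le_top
  · rw [Gex_ge2 kap (by omega : 2 ≤ q + 1)]; exact bot_le

lemma Wex_le_succ {n : ℤ} (h2 : n ≠ -2) (h0 : n ≠ 0) : Wex n ≤ Wex (n + 1) := by
  rcases le_or_gt n (-3) with h | h
  · rw [Wex_le2 (by omega : n + 1 ≤ -2)]; exact le_top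
  rcases eq_or_lt_of_le (by omega : -1 ≤ n) with h' | h'
  · rw [Wex_mid h'.le (h'.ge.trans (by norm_num)), Wex_mid (by omega) (by omega)]

  · rw [Wex_pos (by omega : 1 ≤ n)]; exact bot_le


lemma FEe_top (lam : ℂ) {p : ℤ} (h : p ≤ 1) : Fex lam p ⊔ Ee = ⊤ := by
  rcases le_or_gt p 0 with h' | h'
  · rw [Fex_np lam h', top_sup_eq]
  · rw [show p = 1 by omega, Fex_one, sup_Lv_Ee]

lemma GEe_top (kap : ℂ) {q : ℤ} (h : q ≤ 1) : Gex kap q ⊔ Ee = ⊤ := by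
  rcases le_or_gt q 0 with h' | h'
  · rw [Gex_np kap h', top_sup_eq]
  · rw [show q = 1 by omega, Gex_one, sup_Lv_Ee]

lemma FinfEe_bot (lam : ℂ) {p : ℤ} (h : 1 ≤ p) : Fex lam p ⊓ Ee = ⊥ := by
  rcases eq_or_lt_of_le h with h' | h'
  · rw [← h', Fex_one, inf_Lv_Ee]
  · rw [Fex_ge2 lam (by omega), bot_inf_eq]

lemma GinfEe_bot (kap : ℂ) {q : ℤ} (h : 1 ≤ q) : Gex kap q ⊓ Ee = ⊥ := by
  rcases eq_or_lt_of_le h with h' | h'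
  · rw [← h', Gex_one, inf_Lv_Ee]
  · rw [Gex_ge2 kap (by omega), bot_inf_eq]

lemma opposed_ex (lam kap : ℂ) : Opposed Wex (Fex lam) (Gex kap) := by
  intro p q n hpqn
  by_cases hn2 : n = -2
  · subst hn2
    rw [show (-2 : ℤ) + 1 = -1 by norm_num, Wex_le2 le_rfl,
      Wex_mid le_rfl (by norm_num), inf_top_eq, inf_top_eq, inf_top_eq, inf_top_eq]
    rcases le_or_gt p 0 with hp | hp
    · refine le_sup_of_le_left ?_
      rw [FEe_top lam (by omega : p + 1 ≤ 1), top_inf_eq]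
      exact inf_le_right
    rcases lt_or_ge p 2 with hp2 | hp2
    · -- p = 1, so q ≠ 1
      have hq : q ≠ 1 := by omega
      rcases le_or_gt q 0 with hq0 | hq0
      · refine le_sup_of_le_right ?_
        rw [GEe_top kap (by omega : q + 1 ≤ 1), inf_top_eq]
        exact inf_le_left
      · -- q ≥ 2
        refine le_trans ?_ (le_sup_of_le_left (le_inf le_sup_right le_sup_right))
        exact inf_le_right.trans (by rw [Gex_ge2 kap (by omega), bot_sup_eq])
    · -- p ≥ 2
      refine le_trans ?_ (le_sup_of_le_left (le_inf le_sup_right le_sup_right))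
      exact inf_le_left.trans (by rw [Fex_ge2 lam hp2, bot_sup_eq])
  · by_cases hn0 : n = 0
    · subst hn0
      rw [show (0 : ℤ) + 1 = 1 by norm_num, Wex_mid (by norm_num) le_rfl,
        Wex_pos le_rfl, sup_bot_eq, sup_bot_eq, sup_bot_eq, sup_bot_eq]
      rcases lt_or_ge p 0 with hp | hp
      · refine le_sup_of_le_left ?_
        rw [Fex_np lam (by omega : p + 1 ≤ 0), Fex_np lam (by omega : p ≤ 0)]
      rcases lt_or_ge 0 p with hp1 | hp1
      · exact le_trans (inf_le_left.trans (FinfEe_bot lam hp1).le) bot_le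
      · -- p = 0, q ≠ 0
        have hq : q ≠ 0 := by omega
        rcases lt_or_ge q 0 with hq' | hq'
        · refine le_sup_of_le_right ?_
          rw [Gex_np kap (by omega : q + 1 ≤ 0), Gex_np kap (by omega : q ≤ 0)]
        · exact le_trans (inf_le_right.trans (GinfEe_bot kap (by omega)).le) bot_le
    · have h1 : Wex n ≤ Wex (n + 1) := Wex_le_succ hn2 hn0
      refine le_trans ?_ (le_sup_of_le_left (le_inf le_sup_right le_sup_right))
      exact inf_le_left.trans (sup_le (inf_le_right.trans h1) le_rfl)

lemma sdim_eq (lam kap : ℂ) (p q : ℤ) :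
    sdim (Fex lam) (Gex kap) p q =
      finrank ℂ ↥(Fex lam p ⊓ Gex kap q) -
        finrank ℂ ↥((Fex lam (p + 1) ⊓ Gex kap q) ⊔ (Fex lam p ⊓ Gex kap (q + 1))) :=
  quotdim _ _ (sup_le (inf_le_inf_right _ (Fex_anti lam p))
    (inf_le_inf_left _ (Gex_anti kap q)))

lemma hDen_le_hNum (lam kap : ℂ) (p q : ℤ) :
    hDen Wex (Fex lam) (Gex kap) p q ≤ hNum Wex (Fex lam) (Gex kap) p q := by
  unfold hDen hNum
  exact sup_le
    (inf_le_inf_right _ (sup_le_sup_right (inf_le_inf_right _ (Fex_anti lam p)) _))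
    (inf_le_inf_left _ (sup_le_sup_right (inf_le_inf_right _ (Gex_anti kap q)) _))

lemma hdim_eq (lam kap : ℂ) (p q : ℤ) :
    hdim Wex (Fex lam) (Gex kap) p q =
      finrank ℂ ↥(hNum Wex (Fex lam) (Gex kap) p q) -
        finrank ℂ ↥(hDen Wex (Fex lam) (Gex kap) p q) :=
  quotdim _ _ (hDen_le_hNum lam kap p q)

lemma hdim_zero_of_W (lam kap : ℂ) {p q : ℤ} (h2 : p + q ≠ 2) (h0 : p + q ≠ 0) :
    hdim Wex (Fex lam) (Gex kap) p q = 0 := by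
  have hW : Wex (-p - q) ≤ Wex (-p - q + 1) :=
    Wex_le_succ (by omega) (by omega)
  have hle : hNum Wex (Fex lam) (Gex kap) p q ≤ hDen Wex (Fex lam) (Gex kap) p q := by
    refine le_trans ?_ (le_sup_of_le_left (le_inf le_sup_right le_sup_right))
    exact inf_le_left.trans (sup_le (inf_le_right.trans hW) le_rfl)
  rw [hdim_eq, le_antisymm hle (hDen_le_hNum lam kap p q), Nat.sub_self]

lemma hdim_zero_left (lam kap : ℂ) {p q : ℤ} (hpq : p + q = 2) (hp : p ≤ 0) :
    hdim Wex (Fex lam) (Gex kap) p q = 0 := by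
  have hle : hNum Wex (Fex lam) (Gex kap) p q ≤ hDen Wex (Fex lam) (Gex kap) p q := by
    unfold hNum hDen
    refine le_sup_of_le_left ?_
    rw [show -p - q = -2 by omega, show (-2 : ℤ) + 1 = -1 by norm_num,
      Wex_le2 le_rfl, Wex_mid le_rfl (by norm_num), inf_top_eq, inf_top_eq, inf_top_eq,
      FEe_top lam (by omega : p + 1 ≤ 1), top_inf_eq]
    exact inf_le_right
  rw [hdim_eq, le_antisymm hle (hDen_le_hNum lam kap p q), Nat.sub_self]

lemma hdim_zero_right (lam kap : ℂ) {p q : ℤ} (hpq : p + q = 2) (hq : q ≤ 0) :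
    hdim Wex (Fex lam) (Gex kap) p q = 0 := by
  have hle : hNum Wex (Fex lam) (Gex kap) p q ≤ hDen Wex (Fex lam) (Gex kap) p q := by
    unfold hNum hDen
    refine le_sup_of_le_right ?_
    rw [show -p - q = -2 by omega, show (-2 : ℤ) + 1 = -1 by norm_num,
      Wex_le2 le_rfl, Wex_mid le_rfl (by norm_num), inf_top_eq, inf_top_eq, inf_top_eq,
      GEe_top kap (by omega : q + 1 ≤ 1), inf_top_eq]
    exact inf_le_left
  rw [hdim_eq, le_antisymm hle (hDen_le_hNum lam kap p q), Nat.sub_self]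

lemma hdim_11 (lam kap : ℂ) : hdim Wex (Fex lam) (Gex kap) 1 1 = 1 := by
  have hnum : hNum Wex (Fex lam) (Gex kap) 1 1 = ⊤ := by
    unfold hNum
    rw [show -(1 : ℤ) - 1 = -2 by norm_num, show (-2 : ℤ) + 1 = -1 by norm_num,
      Wex_le2 le_rfl, Wex_mid le_rfl (by norm_num), inf_top_eq, inf_top_eq,
      Fex_one, Gex_one, sup_Lv_Ee, sup_Lv_Ee, top_inf_eq]
  have hden : hDen Wex (Fex lam) (Gex kap) 1 1 = Ee := by
    unfold hDen
    rw [show -(1 : ℤ) - 1 = -2 by norm_num, show (-2 : ℤ) + 1 = -1 by norm_num,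
      Wex_le2 le_rfl, Wex_mid le_rfl (by norm_num), inf_top_eq, inf_top_eq,
      inf_top_eq, inf_top_eq, show (1 : ℤ) + 1 = 2 by norm_num,
      Fex_ge2 lam le_rfl, Gex_ge2 kap le_rfl, bot_sup_eq, Fex_one, Gex_one,
      sup_Lv_Ee, sup_Lv_Ee, top_inf_eq, inf_top_eq, sup_idem]
  rw [hdim_eq, hnum, hden, finrank_top2, finrank_Ee]

lemma sdim_zero_pneg (lam kap : ℂ) {p q : ℤ} (hp : p ≤ -1) :
    sdim (Fex lam) (Gex kap) p q = 0 := by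
  rw [sdim_eq, Fex_np lam (by omega : p + 1 ≤ 0), Fex_np lam (by omega : p ≤ 0),
    top_inf_eq, top_inf_eq, sup_eq_left.mpr (Gex_anti kap q), Nat.sub_self]

lemma sdim_zero_qneg (lam kap : ℂ) {p q : ℤ} (hq : q ≤ -1) :
    sdim (Fex lam) (Gex kap) p q = 0 := by
  rw [sdim_eq, Gex_np kap (by omega : q + 1 ≤ 0), Gex_np kap (by omega : q ≤ 0),
    inf_top_eq, inf_top_eq, sup_eq_right.mpr (Fex_anti lam p), Nat.sub_self]

lemma sdim_zero_pbig (lam kap : ℂ) {p q : ℤ} (hp : 2 ≤ p) :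
    sdim (Fex lam) (Gex kap) p q = 0 := by
  rw [sdim_eq, Fex_ge2 lam (by omega : 2 ≤ p + 1), Fex_ge2 lam hp,
    bot_inf_eq, bot_inf_eq, bot_sup_eq, Nat.sub_self]

lemma sdim_zero_qbig (lam kap : ℂ) {p q : ℤ} (hq : 2 ≤ q) :
    sdim (Fex lam) (Gex kap) p q = 0 := by
  rw [sdim_eq, Gex_ge2 kap (by omega : 2 ≤ q + 1), Gex_ge2 kap hq,
    inf_bot_eq, inf_bot_eq, sup_bot_eq, Nat.sub_self]

lemma sdim_10 (lam kap : ℂ) :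
    sdim (Fex lam) (Gex kap) 1 0 = if lam = kap then 0 else 1 := by
  rw [sdim_eq, show (1 : ℤ) + 1 = 2 by norm_num, show (0 : ℤ) + 1 = 1 by norm_num,
    Fex_ge2 lam le_rfl, Gex_np kap le_rfl, Fex_one, Gex_one, bot_inf_eq, bot_sup_eq,
    inf_top_eq, finrank_Lv]
  split_ifs with h
  · rw [h, inf_idem, finrank_Lv]
  · rw [inf_Lv_Lv h, finrank_bot]

lemma sdim_01 (lam kap : ℂ) :
    sdim (Fex lam) (Gex kap) 0 1 = if lam = kap then 0 else 1 := by
  rw [sdim_eq, show (0 : ℤ) + 1 = 1 by norm_num, show (1 : ℤ) + 1 = 2 by norm_num,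
    Gex_ge2 kap le_rfl, Fex_np lam le_rfl, Fex_one, Gex_one, inf_bot_eq, sup_bot_eq,
    top_inf_eq, finrank_Lv]
  split_ifs with h
  · rw [h, inf_idem, finrank_Lv]
  · rw [inf_Lv_Lv h, finrank_bot]

lemma sdim_11 (lam kap : ℂ) :
    sdim (Fex lam) (Gex kap) 1 1 = if lam = kap then 1 else 0 := by
  rw [sdim_eq, show (1 : ℤ) + 1 = 2 by norm_num, Fex_ge2 lam le_rfl,
    Gex_ge2 kap le_rfl, Fex_one, Gex_one, bot_inf_eq, inf_bot_eq, sup_bot_eq,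
    finrank_bot]
  split_ifs with h
  · rw [h, inf_idem, finrank_Lv]
  · rw [inf_Lv_Lv h, finrank_bot]

lemma term_zero (lam kap : ℂ) (p q : ℤ) (h1 : ¬(p = 1 ∧ q = 0)) (h2 : ¬(p = 0 ∧ q = 1))
    (h3 : ¬(p = 1 ∧ q = 1)) :
    ((p + q) ^ 2 * ((hdim Wex (Fex lam) (Gex kap) p q : ℤ) -
      (sdim (Fex lam) (Gex kap) p q : ℤ)) : ℤ) = 0 := by
  by_cases h0 : p + q = 0
  · rw [h0]; ring
  have hh : hdim Wex (Fex lam) (Gex kap) p q = 0 := by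
    by_cases h2' : p + q = 2
    · rcases le_or_gt p 0 with hp | hp
      · exact hdim_zero_left lam kap h2' hp
      · exact hdim_zero_right lam kap h2' (by omega)
    · exact hdim_zero_of_W lam kap h2' h0
  have hs : sdim (Fex lam) (Gex kap) p q = 0 := by
    rcases le_or_gt p (-1) with hp | hp
    · exact sdim_zero_pneg lam kap hp
    rcases le_or_gt 2 p with hp2 | hp2
    · exact sdim_zero_pbig lam kap hp2
    rcases le_or_gt q (-1) with hq | hq
    · exact sdim_zero_qneg lam kap hq
    rcases le_or_gt 2 q with hq2 | hq2
    · exact sdim_zero_qbig lam kap hq2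
    omega
  rw [hh, hs]
  ring

lemma hdim_10 (lam kap : ℂ) : hdim Wex (Fex lam) (Gex kap) 1 0 = 0 :=
  hdim_zero_of_W lam kap (by norm_num) (by norm_num)

lemma hdim_01 (lam kap : ℂ) : hdim Wex (Fex lam) (Gex kap) 0 1 = 0 :=
  hdim_zero_of_W lam kap (by norm_num) (by norm_num)

lemma alpha_eq (lam kap : ℂ) (h : lam = kap) : alphaQ Wex (Fex lam) (Gex kap) = 0 := by
  rw [alphaQ]
  have hz : ∀ pq : ℤ × ℤ,
      ((((pq.1 + pq.2) ^ 2 * ((hdim Wex (Fex lam) (Gex kap) pq.1 pq.2 : ℤ) -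
        (sdim (Fex lam) (Gex kap) pq.1 pq.2 : ℤ))) : ℤ) : ℚ) = 0 := by
    rintro ⟨p, q⟩
    by_cases h1 : p = 1 ∧ q = 0
    · obtain ⟨rfl, rfl⟩ := h1
      rw [hdim_10, sdim_10, if_pos h]; norm_num
    by_cases h2 : p = 0 ∧ q = 1
    · obtain ⟨rfl, rfl⟩ := h2
      rw [hdim_01, sdim_01, if_pos h]; norm_num
    by_cases h3 : p = 1 ∧ q = 1
    · obtain ⟨rfl, rfl⟩ := h3
      rw [hdim_11, sdim_11, if_pos h]; norm_num
    · rw [term_zero lam kap p q h1 h2 h3]; norm_num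
  rw [finsum_congr hz, finsum_zero, mul_zero]

lemma alpha_ne (lam kap : ℂ) (h : lam ≠ kap) : alphaQ Wex (Fex lam) (Gex kap) = 1 := by
  rw [alphaQ]
  set f : ℤ × ℤ → ℚ := fun pq =>
    ((((pq.1 + pq.2) ^ 2 * ((hdim Wex (Fex lam) (Gex kap) pq.1 pq.2 : ℤ) -
      (sdim (Fex lam) (Gex kap) pq.1 pq.2 : ℤ))) : ℤ) : ℚ) with hf
  have hsupp : Function.support f ⊆
      (({((1 : ℤ), (0 : ℤ)), ((0 : ℤ), (1 : ℤ)), ((1 : ℤ), (1 : ℤ))} : Finset (ℤ × ℤ)) :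
        Set (ℤ × ℤ)) := by
    rintro ⟨p, q⟩ hpq
    by_contra hmem
    simp only [Finset.coe_insert, Finset.coe_singleton, Set.mem_insert_iff,
      Set.mem_singleton_iff, Prod.mk.injEq, not_or] at hmem
    obtain ⟨h1, h2, h3⟩ := hmem
    refine hpq ?_
    show f (p, q) = 0
    rw [hf]
    dsimp only
    rw [term_zero lam kap p q h1 h2 h3, Int.cast_zero]
  rw [finsum_eq_sum_of_support_subset f hsupp]
  rw [Finset.sum_insert (by decide), Finset.sum_insert (by decide),
    Finset.sum_singleton]
  simp only [hf, hdim_10, hdim_01, hdim_11, sdim_10, sdim_01, sdim_11, if_neg h]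
  norm_num

/-- The three filtrations `W, F, G` above are opposed, and
`(1/2) ∑_{p,q} (p+q)² (h^{p,q} − s^{p,q})` is `0` if `λ = κ` and `1` if `λ ≠ κ`. -/
theorem example_opposed_and_alpha (lam kap : ℂ) :
    Opposed Wex (Fex lam) (Gex kap) ∧
      (lam = kap → alphaQ Wex (Fex lam) (Gex kap) = 0) ∧
      (lam ≠ kap → alphaQ Wex (Fex lam) (Gex kap) = 1) :=
  ⟨opposed_ex lam kap, alpha_eq lam kap, alpha_ne lam kap⟩

end
end
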